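/- Let T be a tree (possibly infinite) and let X be an infinite set of vertices of T. Then either T contains a ray whose vertex set meets X in an infinite set, or T contains a subtree S such that infinitely many leaves of S belong to X. -/

import Mathlib

/-!
Root `T` at a vertex `r` and call `u` an ancestor of `z` when `u` lies on the path from `r`
to `z`. Depth strictly increases along this order, so by Ramsey's theorem an enumeration of `X`
has a subsequence that is a chain or an antichain. The root paths of an infinite chain are nested
initial segments of one ray, which passes through the whole chain. The root paths of an antichain
avoiding `r` span a subtree in which each member of the antichain is a leaf: its only neighbour
there is its parent, since a child would lie below another member.
-/

theorem exists_subseq_chain_or_antichain {α : Type*} (r : α → α → Prop) [IsTrans α r]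
    (hwf : WellFounded fun a b => r a b ∧ ¬ r b a) (f : ℕ → α) :
    ∃ g : ℕ ↪o ℕ, (∀ m n, m < n → r (f (g m)) (f (g n))) ∨
      ∀ m n, m ≠ n → ¬ r (f (g m)) (f (g n)) := by
  obtain ⟨g, hchain | hg⟩ := exists_increasing_or_nonincreasing_subseq r f
  · exact ⟨g, Or.inl hchain⟩
  -- a second extraction from the reversed order; its chains descend, which `hwf` forbids
  obtain ⟨h, hdesc | hh⟩ :=
    exists_increasing_or_nonincreasing_subseq (Function.swap r) (f ∘ g)
  · have : IsWellFounded α fun a b => r a b ∧ ¬ r b a := ⟨hwf⟩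
    obtain ⟨n, hn⟩ :=
      WellFounded.not_rel_apply_succ (r := fun a b => r a b ∧ ¬ r b a) fun n => f (g (h n))
    exact (hn ⟨hdesc n (n + 1) n.lt_succ_self, hg _ _ (h.strictMono n.lt_succ_self)⟩).elim
  · refine ⟨h.trans g, Or.inr fun m n hmn => ?_⟩
    rcases hmn.lt_or_gt with hlt | hlt
    · exact hg _ _ (h.strictMono hlt)
    · exact hh _ _ hlt

namespace SimpleGraph.IsTree

variable {V : Type*} {T : SimpleGraph V} (hT : T.IsTree)

noncomputable def rootPath (r z : V) : T.Walk r z :=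
  (hT.existsUnique_path r z).exists.choose

def IsAncestor (r u z : V) : Prop :=
  u ∈ (hT.rootPath r z).support

variable {hT} {r u w z : V}

lemma isPath_rootPath (r z : V) : (hT.rootPath r z).IsPath :=
  (hT.existsUnique_path r z).exists.choose_spec

lemma eq_rootPath {p : T.Walk r z} (hp : p.IsPath) : p = hT.rootPath r z :=
  (hT.existsUnique_path r z).unique hp (isPath_rootPath r z)

lemma isAncestor_root (r z : V) : hT.IsAncestor r r z :=
  (hT.rootPath r z).start_mem_support

lemma isAncestor_refl (r z : V) : hT.IsAncestor r z z :=
  (hT.rootPath r z).end_mem_support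

lemma rootPath_eq_takeUntil [DecidableEq V] (h : hT.IsAncestor r u z) :
    hT.rootPath r u = (hT.rootPath r z).takeUntil u h :=
  (eq_rootPath ((isPath_rootPath r z).takeUntil h)).symm

lemma IsAncestor.trans (huw : hT.IsAncestor r u w) (hwz : hT.IsAncestor r w z) :
    hT.IsAncestor r u z := by
  classical
  rw [IsAncestor, rootPath_eq_takeUntil hwz] at huw
  exact (hT.rootPath r z).support_takeUntil_subset_support hwz huw

instance (hT : T.IsTree) (r : V) : IsTrans V (hT.IsAncestor r) :=
  ⟨fun _ _ _ => IsAncestor.trans⟩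

lemma IsAncestor.length_le (h : hT.IsAncestor r u z) :
    (hT.rootPath r u).length ≤ (hT.rootPath r z).length := by
  classical
  rw [rootPath_eq_takeUntil h]
  exact (hT.rootPath r z).length_takeUntil_le_length h

lemma IsAncestor.length_lt (h : hT.IsAncestor r u z) (hne : u ≠ z) :
    (hT.rootPath r u).length < (hT.rootPath r z).length := by
  classical
  rw [rootPath_eq_takeUntil h]
  exact (hT.rootPath r z).length_takeUntil_lt_length h hne

lemma IsAncestor.antisymm (huz : hT.IsAncestor r u z) (hzu : hT.IsAncestor r z u) : u = z :=
  by_contra fun hne => (huz.length_lt hne).not_ge hzu.length_le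

lemma wellFounded_isAncestor_strict (hT : T.IsTree) (r : V) :
    WellFounded fun u z => hT.IsAncestor r u z ∧ ¬ hT.IsAncestor r z u :=
  (measure fun z => (hT.rootPath r z).length).wf.mono fun _ _ h =>
    h.1.length_lt fun heq => h.2 (heq ▸ isAncestor_refl r _)

lemma IsAncestor.getVert_rootPath (h : hT.IsAncestor r u z) {i : ℕ}
    (hi : i ≤ (hT.rootPath r u).length) :
    (hT.rootPath r z).getVert i = (hT.rootPath r u).getVert i := by
  classical
  rw [rootPath_eq_takeUntil h] at hi ⊢
  exact (Walk.getVert_takeUntil h hi).symm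

lemma rootPath_eq_concat {y : V} (h : T.Adj y z) (hz : ¬ hT.IsAncestor r z y) :
    hT.rootPath r z = (hT.rootPath r y).concat h := by
  refine (eq_rootPath ?_).symm
  rw [← Walk.isPath_reverse_iff, Walk.reverse_concat]
  exact (isPath_rootPath r y).reverse.cons (by simpa [IsAncestor] using hz)

lemma connected_induce_of_isAncestor_mem {S : Set V} (hS : S.Nonempty)
    (hclosed : ∀ u z, z ∈ S → hT.IsAncestor r u z → u ∈ S) : (T.induce S).Connected := by
  obtain ⟨z, hz⟩ := hS
  have hsupp : ∀ u ∈ S, ∀ w ∈ (hT.rootPath r u).support, w ∈ S :=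
    fun u hu w hw => hclosed w u hu hw
  refine (connected_iff_exists_forall_reachable _).2
    ⟨⟨r, hclosed r z hz (isAncestor_root r z)⟩, fun ⟨u, hu⟩ => ?_⟩
  exact ⟨(hT.rootPath r u).induce S (hsupp u hu)⟩

theorem exists_ray_of_chain {x : ℕ → V} (hx : Function.Injective x)
    (hchain : ∀ m n, m < n → hT.IsAncestor r (x m) (x n)) :
    ∃ f : ℕ → V, Function.Injective f ∧ (∀ n, T.Adj (f n) (f (n + 1))) ∧
      Set.range x ⊆ Set.range f := by
  have hdepth : ∀ n, n ≤ (hT.rootPath r (x n)).length :=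
    StrictMono.id_le fun m n hmn => (hchain m n hmn).length_lt (hx.ne hmn.ne)
  have hmono : ∀ {m n}, m ≤ n → hT.IsAncestor r (x m) (x n) := fun {m n} hmn =>
    hmn.eq_or_lt.elim (fun h => h ▸ isAncestor_refl r _) (hchain m n)
  set f : ℕ → V := fun n => (hT.rootPath r (x n)).getVert n
  have hf : ∀ {n N}, n ≤ N → f n = (hT.rootPath r (x N)).getVert n := fun hnN =>
    ((hmono hnN).getVert_rootPath (hdepth _)).symm
  refine ⟨f, fun m n hmn => ?_, fun n => ?_, ?_⟩
  · have hN := hdepth (max m n)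
    rw [hf (le_max_left m n), hf (le_max_right m n)] at hmn
    exact (isPath_rootPath r _).getVert_injOn (by simp; omega) (by simp; omega) hmn
  · rw [hf n.le_succ]
    exact (hT.rootPath r _).adj_getVert_succ (hdepth _)
  · rintro _ ⟨k, rfl⟩
    refine ⟨(hT.rootPath r (x k)).length, ?_⟩
    change (hT.rootPath r _).getVert _ = _
    rw [(hmono (hdepth k)).getVert_rootPath le_rfl, Walk.getVert_length]

theorem exists_subtree_leaves_of_isAntichain {A : Set V}
    (hA : IsAntichain (hT.IsAncestor r) A) (hne : A.Nonempty) (hr : r ∉ A) :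
    ∃ S : Set V, S.Nonempty ∧ (T.induce S).Connected ∧
      A ⊆ {x | x ∈ S ∧ ∃! y, y ∈ S ∧ T.Adj x y} := by
  set S := {u | ∃ a ∈ A, hT.IsAncestor r u a}
  have hAS : A ⊆ S := fun a ha => ⟨a, ha, isAncestor_refl r a⟩
  have hclosed : ∀ u z, z ∈ S → hT.IsAncestor r u z → u ∈ S :=
    fun u z ⟨a, ha, hza⟩ huz => ⟨a, ha, huz.trans hza⟩
  refine ⟨S, hne.mono hAS, connected_induce_of_isAncestor_mem (hne.mono hAS) hclosed,
    fun a ha => ⟨hAS ha, (hT.rootPath r a).penultimate, ⟨?_, ?_⟩, ?_⟩⟩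
  · exact hclosed _ a (hAS ha) ((hT.rootPath r a).getVert_mem_support _)
  · exact (Walk.adj_penultimate fun h : (hT.rootPath r a).Nil => hr (h.eq ▸ ha)).symm
  rintro y ⟨⟨b, hb, hyb⟩, hay⟩
  have hnot : ¬ hT.IsAncestor r a y := fun hay' => by
    obtain rfl : a = b := hA.eq ha hb (hay'.trans hyb)
    exact hay.ne (hay'.antisymm hyb)
  rw [rootPath_eq_concat hay.symm hnot, Walk.penultimate_concat]

end SimpleGraph.IsTree

/-- Let `T` be a (possibly infinite) tree and `X` an infinite set of vertices.
Then either `T` contains a ray meeting `X` in an infinite set, or `T` contains a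
subtree `S` such that infinitely many leaves of `S` belong to `X`. -/
theorem tree_ray_or_leafy_subtree {V : Type*}
    (T : SimpleGraph V) (hT : T.IsTree) (X : Set V) (hX : X.Infinite) :
    (∃ f : ℕ → V, Function.Injective f ∧ (∀ n, T.Adj (f n) (f (n + 1))) ∧
        (X ∩ Set.range f).Infinite) ∨
      (∃ S : Set V, S.Nonempty ∧ (T.induce S).Connected ∧
        (X ∩ {x : V | x ∈ S ∧ ∃! y, y ∈ S ∧ T.Adj x y}).Infinite) := by
  obtain ⟨r, -⟩ := hX.nonempty
  set x : ℕ → V := fun n => hX.natEmbedding X n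
  have hx : Function.Injective x := Subtype.val_injective.comp (hX.natEmbedding X).injective
  obtain ⟨g, hchain | hanti⟩ := exists_subseq_chain_or_antichain (hT.IsAncestor r)
    (hT.wellFounded_isAncestor_strict r) x
  · obtain ⟨f, hf, hadj, hrange⟩ := hT.exists_ray_of_chain (hx.comp g.injective) hchain
    refine Or.inl ⟨f, hf, hadj, (Set.infinite_range_of_injective (hx.comp g.injective)).mono ?_⟩
    rintro _ ⟨n, rfl⟩
    exact ⟨(hX.natEmbedding X (g n)).2, hrange ⟨n, rfl⟩⟩
  · set A := Set.range (x ∘ g) \ {r}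
    have hAinf : A.Infinite :=
      (Set.infinite_range_of_injective (hx.comp g.injective)).sdiff (Set.finite_singleton r)
    have hA : IsAntichain (hT.IsAncestor r) A := by
      rintro _ ⟨⟨m, rfl⟩, -⟩ _ ⟨⟨n, rfl⟩, -⟩ hne
      exact hanti m n fun h => hne (h ▸ rfl)
    obtain ⟨S, hS, hconn, hleaves⟩ :=
      hT.exists_subtree_leaves_of_isAntichain hA hAinf.nonempty fun h => h.2 rfl
    refine Or.inr ⟨S, hS, hconn, hAinf.mono fun a ha => ⟨?_, hleaves ha⟩⟩
    obtain ⟨⟨n, rfl⟩, -⟩ := ha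
    exact (hX.natEmbedding X (g n)).2
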